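/- Let S = S^T ∈ ℝ^{N×N} with spectral decomposition S = V_p Σ_p V_p^T + V_{p,⊥} Σ'_p V_{p,⊥}^T, where [V_p, V_{p,⊥}] is orthogonal, V_p has p columns, and Σ_p, Σ'_p are diagonal. Let V̂ ∈ ℝ^{N×p} be column orthonormal with V̂^T S V̂ diagonal and let V̂_⊥ complete it to an orthogonal matrix. If ε = ||V_{p,⊥}^T V̂|| (the distance between span{V̂} and span{V_p}), then the residual R = S V̂ − V̂ (V̂^T S V̂) satisfies ||R|| ≤ 2 ||S|| ε. -/

import Mathlib

/-! Since `V̂ V̂ᵀ + V̂_⊥ V̂_⊥ᵀ = 1`, the residual is `R = V̂_⊥ (V̂_⊥ᵀ S V̂)`, and the spectral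
decomposition of `S` gives `V̂_⊥ᵀ S V̂ = Z₁ᵀ Σ_p Y₁ + Z₂ᵀ Σ'_p Y₂`, where `‖Σ_p‖, ‖Σ'_p‖ ≤ ‖S‖`
and `‖Y₁‖, ‖Z₂‖ ≤ 1`. Hence `‖R‖ ≤ ‖S‖ (‖Z₁‖ + ‖Y₂‖)`. Finally `‖Z₁‖ = ‖Y₂‖ = ε`: for the square
matrix `Y₁ = V_pᵀ V̂` one has `Z₁ᵀ Z₁ = 1 - Y₁ Y₁ᵀ` and `Y₂ᵀ Y₂ = 1 - Y₁ᵀ Y₁`, two symmetric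
matrices with the same characteristic polynomial, hence the same spectrum and the same norm. -/

open Matrix

noncomputable def snorm {m n : Type*} [Fintype m] [Fintype n] [DecidableEq n]
    (A : Matrix m n ℝ) : ℝ :=
  ‖LinearMap.toContinuousLinearMap (Matrix.toEuclideanLin A)‖

open scoped Matrix.Norms.L2Operator

theorem snorm_eq_l2_opNorm {m n : Type*} [Fintype m] [Fintype n] [DecidableEq n]
    (A : Matrix m n ℝ) : snorm A = ‖A‖ := rfl

namespace Matrix

variable {R m n k l : Type*}

theorem transpose_fromCols_mul_fromCols_eq_one_iff [CommRing R] [Fintype m] [DecidableEq n]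
    [DecidableEq k] {A : Matrix m n R} {B : Matrix m k R} :
    (fromCols A B)ᵀ * fromCols A B = 1 ↔ Aᵀ * A = 1 ∧ Aᵀ * B = 0 ∧ Bᵀ * A = 0 ∧ Bᵀ * B = 1 := by
  rw [transpose_fromCols, fromRows_mul_fromCols, ← fromBlocks_one, fromBlocks_inj]

theorem fromCols_mul_transpose_fromCols [CommRing R] [Fintype n] [Fintype k] (A : Matrix m n R)
    (B : Matrix m k R) : fromCols A B * (fromCols A B)ᵀ = A * Aᵀ + B * Bᵀ := by
  rw [transpose_fromCols, fromCols_mul_fromRows]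

theorem transpose_mul_self_of_mul_transpose_add_eq_one [CommRing R] [Fintype m] [Fintype n]
    [Fintype l] [DecidableEq m] [DecidableEq k] {W₁ : Matrix m n R} {W₂ : Matrix m l R}
    {U : Matrix m k R} (hW : W₁ * W₁ᵀ + W₂ * W₂ᵀ = 1) (hU : Uᵀ * U = 1) :
    (W₂ᵀ * U)ᵀ * (W₂ᵀ * U) = 1 - (W₁ᵀ * U)ᵀ * (W₁ᵀ * U) := by
  have hW₂ : W₂ * W₂ᵀ = 1 - W₁ * W₁ᵀ := eq_sub_of_add_eq' hW
  calc (W₂ᵀ * U)ᵀ * (W₂ᵀ * U) = Uᵀ * (W₂ * W₂ᵀ) * U := by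
        simp only [transpose_mul, transpose_transpose, Matrix.mul_assoc]
    _ = 1 - (W₁ᵀ * U)ᵀ * (W₁ᵀ * U) := by
        simp only [hW₂, Matrix.mul_sub, Matrix.sub_mul, Matrix.mul_one, transpose_mul,
          transpose_transpose, Matrix.mul_assoc, hU]

theorem mul_transpose_mul_sub_eq_of_mul_transpose_add_eq_one [CommRing R] [Fintype m]
    [Fintype n] [Fintype l] [DecidableEq m] {W₁ : Matrix m n R} {W₂ : Matrix m l R}
    (hW : W₁ * W₁ᵀ + W₂ * W₂ᵀ = 1) (S : Matrix m m R) :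
    S * W₁ - W₁ * (W₁ᵀ * S * W₁) = W₂ * (W₂ᵀ * S * W₁) := by
  simp only [← Matrix.mul_assoc, eq_sub_of_add_eq' hW, Matrix.sub_mul, Matrix.one_mul]

section L2Norm

variable [Fintype m] [Fintype n] [Fintype k] [DecidableEq n] [DecidableEq k]

theorem l2_opNorm_transpose [DecidableEq m] (A : Matrix m n ℝ) : ‖Aᵀ‖ = ‖A‖ := by
  rw [← conjTranspose_eq_transpose_of_trivial, l2_opNorm_conjTranspose]

theorem l2_opNorm_transpose_mul_self (A : Matrix m n ℝ) : ‖Aᵀ * A‖ = ‖A‖ * ‖A‖ := by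
  rw [← conjTranspose_eq_transpose_of_trivial, l2_opNorm_conjTranspose_mul_self]

theorem l2_opNorm_le_one_of_transpose_mul_self_eq_one {A : Matrix m n ℝ} (h : Aᵀ * A = 1) :
    ‖A‖ ≤ 1 := by
  have hone : ‖(1 : Matrix n n ℝ)‖ ≤ 1 := by
    rw [cstar_norm_def, map_one]
    exact ContinuousLinearMap.norm_id_le
  rw [← h, l2_opNorm_transpose_mul_self] at hone
  nlinarith [norm_nonneg A]

theorem l2_opNorm_mul_le_of_le_one_left {A : Matrix m n ℝ} (B : Matrix n k ℝ) (hA : ‖A‖ ≤ 1) :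
    ‖A * B‖ ≤ ‖B‖ :=
  (l2_opNorm_mul A B).trans (mul_le_of_le_one_left (norm_nonneg B) hA)

theorem l2_opNorm_mul_le_of_le_one_right (A : Matrix m n ℝ) {B : Matrix n k ℝ} (hB : ‖B‖ ≤ 1) :
    ‖A * B‖ ≤ ‖A‖ :=
  (l2_opNorm_mul A B).trans (mul_le_of_le_one_right (norm_nonneg A) hB)

theorem l2_opNorm_transpose_mul_le_one [DecidableEq m] {A : Matrix m n ℝ} {B : Matrix m k ℝ}
    (hA : ‖A‖ ≤ 1) (hB : ‖B‖ ≤ 1) : ‖Aᵀ * B‖ ≤ 1 :=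
  (l2_opNorm_mul_le_of_le_one_left B (by rwa [l2_opNorm_transpose])).trans hB

end L2Norm

section Square

variable [Fintype n] [DecidableEq n]

theorem spectrum_mul_comm [Field R] (A B : Matrix n n R) :
    spectrum R (A * B) = spectrum R (B * A) := by
  ext r
  simp only [mem_spectrum_iff_isRoot_charpoly, charpoly_mul_comm]

theorem IsSymm.l2_opNNNorm_eq_spectralRadius {A : Matrix n n ℝ} (hA : A.IsSymm) :
    (‖A‖₊ : ENNReal) = spectralRadius ℝ A := by
  have hself : IsSelfAdjoint (toEuclideanCLM (𝕜 := ℝ) (n := n) A) := by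
    rw [IsSelfAdjoint, ← map_star, star_eq_conjTranspose, conjTranspose_eq_transpose_of_trivial,
      hA.eq]
  rw [cstar_nnnorm_def, ← ContinuousLinearMap.spectralRadius_eq_nnnorm _ hself, spectralRadius,
    spectralRadius, AlgEquiv.spectrum_eq toEuclideanCLM]

theorem l2_opNorm_one_sub_mul_transpose_comm (B : Matrix n n ℝ) :
    ‖1 - B * Bᵀ‖ = ‖1 - Bᵀ * B‖ := by
  have hsymm (C : Matrix n n ℝ) : (1 - C * Cᵀ).IsSymm := by
    simp [IsSymm, transpose_sub, transpose_mul]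
  have hspec : spectrum ℝ (1 - B * Bᵀ) = spectrum ℝ (1 - Bᵀ * B) := by
    rw [← map_one (algebraMap ℝ (Matrix n n ℝ)), ← spectrum.singleton_sub_eq,
      ← spectrum.singleton_sub_eq, spectrum_mul_comm]
  have h := (hsymm B).l2_opNNNorm_eq_spectralRadius
  rw [spectralRadius, hspec, ← spectralRadius,
    ← IsSymm.l2_opNNNorm_eq_spectralRadius (by simpa using hsymm Bᵀ)] at h
  exact congrArg NNReal.toReal (ENNReal.coe_injective h)

end Square

theorem l2_opNorm_transpose_mul_mul_self_le [Fintype m] [Fintype n] [DecidableEq m]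
    [DecidableEq n] {U : Matrix m n ℝ} (hU : ‖U‖ ≤ 1) (S : Matrix m m ℝ) : ‖Uᵀ * S * U‖ ≤ ‖S‖ :=
  (l2_opNorm_mul_le_of_le_one_right _ hU).trans
    (l2_opNorm_mul_le_of_le_one_left S (by rwa [l2_opNorm_transpose]))

theorem l2_opNorm_le_of_eq_add_of_orthonormal [Fintype m] [Fintype n] [Fintype k]
    [DecidableEq m] [DecidableEq n] {S : Matrix m m ℝ} {U₁ : Matrix m n ℝ} {U₂ : Matrix m k ℝ}
    {D₁ : Matrix n n ℝ} {D₂ : Matrix k k ℝ} (hS : S = U₁ * D₁ * U₁ᵀ + U₂ * D₂ * U₂ᵀ)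
    (hU₁ : U₁ᵀ * U₁ = 1) (hU₁₂ : U₁ᵀ * U₂ = 0) : ‖D₁‖ ≤ ‖S‖ := by
  have hD₁ : U₁ᵀ * S * U₁ = D₁ := by
    calc U₁ᵀ * S * U₁ = (U₁ᵀ * U₁) * D₁ * (U₁ᵀ * U₁) + (U₁ᵀ * U₂) * D₂ * (U₁ᵀ * U₂)ᵀ := by
          simp only [hS, transpose_mul, transpose_transpose, Matrix.mul_add, Matrix.add_mul,
            Matrix.mul_assoc]
      _ = D₁ := by simp [hU₁, hU₁₂]
  exact hD₁ ▸ l2_opNorm_transpose_mul_mul_self_le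
    (l2_opNorm_le_one_of_transpose_mul_self_eq_one hU₁) S

theorem l2_opNorm_transpose_mul_comm_of_orthonormal [Fintype m] [Fintype n] [Fintype k]
    [Fintype l] [DecidableEq m] [DecidableEq n] {U₁ W₁ : Matrix m n ℝ} {U₂ : Matrix m k ℝ}
    {W₂ : Matrix m l ℝ} (hU₁ : U₁ᵀ * U₁ = 1) (hW₁ : W₁ᵀ * W₁ = 1)
    (hU : U₁ * U₁ᵀ + U₂ * U₂ᵀ = 1) (hW : W₁ * W₁ᵀ + W₂ * W₂ᵀ = 1) :
    ‖W₂ᵀ * U₁‖ = ‖U₂ᵀ * W₁‖ := by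
  have hsq : ‖W₂ᵀ * U₁‖ * ‖W₂ᵀ * U₁‖ = ‖U₂ᵀ * W₁‖ * ‖U₂ᵀ * W₁‖ := by
    rw [← l2_opNorm_transpose_mul_self, ← l2_opNorm_transpose_mul_self,
      transpose_mul_self_of_mul_transpose_add_eq_one hW hU₁,
      transpose_mul_self_of_mul_transpose_add_eq_one hU hW₁, ← transpose_transpose (W₁ᵀ * U₁),
      transpose_mul W₁ᵀ, transpose_transpose, transpose_transpose,
      l2_opNorm_one_sub_mul_transpose_comm]
  exact (mul_self_inj (norm_nonneg _) (norm_nonneg _)).mp hsq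

theorem l2_opNorm_residual_le {o : Type*} [Fintype m] [Fintype n] [Fintype k] [Fintype l]
    [Fintype o] [DecidableEq m] [DecidableEq n] [DecidableEq k] [DecidableEq l] [DecidableEq o]
    {S : Matrix m m ℝ} {U₁ : Matrix m n ℝ} {U₂ : Matrix m k ℝ} {D₁ : Matrix n n ℝ}
    {D₂ : Matrix k k ℝ} {W₁ : Matrix m l ℝ} {W₂ : Matrix m o ℝ}
    (hS : S = U₁ * D₁ * U₁ᵀ + U₂ * D₂ * U₂ᵀ) (hU₁ : U₁ᵀ * U₁ = 1) (hU₂ : U₂ᵀ * U₂ = 1)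
    (hW₁ : W₁ᵀ * W₁ = 1) (hW₂ : W₂ᵀ * W₂ = 1) (hW : W₁ * W₁ᵀ + W₂ * W₂ᵀ = 1) :
    ‖S * W₁ - W₁ * (W₁ᵀ * S * W₁)‖ ≤ ‖D₁‖ * ‖W₂ᵀ * U₁‖ + ‖D₂‖ * ‖U₂ᵀ * W₁‖ := by
  have hexpand : W₂ᵀ * S * W₁
      = (W₂ᵀ * U₁) * (D₁ * (U₁ᵀ * W₁)) + (W₂ᵀ * U₂) * (D₂ * (U₂ᵀ * W₁)) := by
    simp only [hS, Matrix.mul_add, Matrix.add_mul, Matrix.mul_assoc]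
  have nU₁ := l2_opNorm_le_one_of_transpose_mul_self_eq_one hU₁
  have nU₂ := l2_opNorm_le_one_of_transpose_mul_self_eq_one hU₂
  have nW₁ := l2_opNorm_le_one_of_transpose_mul_self_eq_one hW₁
  have nW₂ := l2_opNorm_le_one_of_transpose_mul_self_eq_one hW₂
  have hfirst : ‖(W₂ᵀ * U₁) * (D₁ * (U₁ᵀ * W₁))‖ ≤ ‖W₂ᵀ * U₁‖ * ‖D₁‖ :=
    (l2_opNorm_mul _ _).trans <| mul_le_mul_of_nonneg_left
      (l2_opNorm_mul_le_of_le_one_right D₁ (l2_opNorm_transpose_mul_le_one nU₁ nW₁))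
      (norm_nonneg _)
  have hsecond : ‖(W₂ᵀ * U₂) * (D₂ * (U₂ᵀ * W₁))‖ ≤ ‖D₂‖ * ‖U₂ᵀ * W₁‖ :=
    (l2_opNorm_mul_le_of_le_one_left _ (l2_opNorm_transpose_mul_le_one nW₂ nU₂)).trans
      (l2_opNorm_mul _ _)
  rw [mul_transpose_mul_sub_eq_of_mul_transpose_add_eq_one hW]
  calc ‖W₂ * (W₂ᵀ * S * W₁)‖ ≤ ‖W₂ᵀ * S * W₁‖ := l2_opNorm_mul_le_of_le_one_left _ nW₂
    _ ≤ ‖(W₂ᵀ * U₁) * (D₁ * (U₁ᵀ * W₁))‖ + ‖(W₂ᵀ * U₂) * (D₂ * (U₂ᵀ * W₁))‖ :=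
        hexpand ▸ norm_add_le _ _
    _ ≤ ‖W₂ᵀ * U₁‖ * ‖D₁‖ + ‖D₂‖ * ‖U₂ᵀ * W₁‖ := add_le_add hfirst hsecond
    _ = ‖D₁‖ * ‖W₂ᵀ * U₁‖ + ‖D₂‖ * ‖U₂ᵀ * W₁‖ := by ring

end Matrix

theorem ritz_residual_bound_general
    (N p q : ℕ)
    (S : Matrix (Fin N) (Fin N) ℝ)
    (Vp : Matrix (Fin N) (Fin p) ℝ) (Vpperp : Matrix (Fin N) (Fin q) ℝ)
    (Sp : Fin p → ℝ) (Sq : Fin q → ℝ)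
    (horthV : (Matrix.fromCols Vp Vpperp)ᵀ * Matrix.fromCols Vp Vpperp = 1)
    (hcompleteV : Matrix.fromCols Vp Vpperp * (Matrix.fromCols Vp Vpperp)ᵀ = 1)
    (hSdecomp : S = Vp * Matrix.diagonal Sp * Vpᵀ +
      Vpperp * Matrix.diagonal Sq * Vpperpᵀ)
    (Vh : Matrix (Fin N) (Fin p) ℝ) (Vhperp : Matrix (Fin N) (Fin q) ℝ)
    (hVh : Vhᵀ * Vh = 1)
    (horthVh : (Matrix.fromCols Vh Vhperp)ᵀ * Matrix.fromCols Vh Vhperp = 1)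
    (hcompleteVh : Matrix.fromCols Vh Vhperp * (Matrix.fromCols Vh Vhperp)ᵀ = 1)
    (ε : ℝ) (hε : ε = snorm (Vpperpᵀ * Vh))
    (R : Matrix (Fin N) (Fin p) ℝ)
    (hR : R = S * Vh - Vh * (Vhᵀ * S * Vh)) :
    snorm R ≤ 2 * snorm S * ε := by
  obtain ⟨hVpVp, hVpVq, hVqVp, hVqVq⟩ := transpose_fromCols_mul_fromCols_eq_one_iff.mp horthV
  obtain ⟨-, -, -, hVhperp⟩ := transpose_fromCols_mul_fromCols_eq_one_iff.mp horthVh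
  rw [fromCols_mul_transpose_fromCols] at hcompleteV hcompleteVh
  rw [snorm_eq_l2_opNorm] at hε
  have hSp : ‖diagonal Sp‖ ≤ ‖S‖ := l2_opNorm_le_of_eq_add_of_orthonormal hSdecomp hVpVp hVpVq
  have hSq : ‖diagonal Sq‖ ≤ ‖S‖ :=
    l2_opNorm_le_of_eq_add_of_orthonormal (hSdecomp.trans (add_comm _ _)) hVqVq hVqVp
  have hsine : ‖Vhperpᵀ * Vp‖ = ε :=
    (l2_opNorm_transpose_mul_comm_of_orthonormal hVpVp hVh hcompleteV hcompleteVh).trans hε.symm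
  have hε0 : 0 ≤ ε := hsine ▸ norm_nonneg _
  rw [snorm_eq_l2_opNorm, snorm_eq_l2_opNorm, hR]
  calc _ ≤ ‖diagonal Sp‖ * ‖Vhperpᵀ * Vp‖ + ‖diagonal Sq‖ * ‖Vpperpᵀ * Vh‖ :=
        l2_opNorm_residual_le hSdecomp hVpVp hVqVq hVh hVhperp hcompleteVh
    _ ≤ ‖S‖ * ε + ‖S‖ * ε := by rw [hsine, ← hε]; gcongr
    _ = 2 * ‖S‖ * ε := by ring

/-- for symmetric `S = V_p Σ_p V_pᵀ + V_{p,⊥} Σ'_p V_{p,⊥}ᵀ`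
with `[V_p, V_{p,⊥}]` orthogonal and a Ritz basis `V̂`, if
`ε = ‖V_{p,⊥}ᵀ V̂‖` then the residual `R = S V̂ − V̂ (V̂ᵀ S V̂)` satisfies
`‖R‖ ≤ 2 ‖S‖ ε`. -/
theorem ritz_residual_bound
    (N p q : ℕ) (hNpq : N = p + q)
    (S : Matrix (Fin N) (Fin N) ℝ) (hS : S.IsSymm)
    (Vp : Matrix (Fin N) (Fin p) ℝ) (Vpperp : Matrix (Fin N) (Fin q) ℝ)
    (Sp : Fin p → ℝ) (Sq : Fin q → ℝ)
    (horthV : (Matrix.fromCols Vp Vpperp)ᵀ * Matrix.fromCols Vp Vpperp = 1)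
    (hcompleteV : Matrix.fromCols Vp Vpperp * (Matrix.fromCols Vp Vpperp)ᵀ = 1)
    (hSdecomp : S = Vp * Matrix.diagonal Sp * Vpᵀ +
      Vpperp * Matrix.diagonal Sq * Vpperpᵀ)
    (Vh : Matrix (Fin N) (Fin p) ℝ) (Vhperp : Matrix (Fin N) (Fin q) ℝ)
    (hVh : Vhᵀ * Vh = 1)
    (hdiag : (Vhᵀ * S * Vh).IsDiag)
    (horthVh : (Matrix.fromCols Vh Vhperp)ᵀ * Matrix.fromCols Vh Vhperp = 1)
    (hcompleteVh : Matrix.fromCols Vh Vhperp * (Matrix.fromCols Vh Vhperp)ᵀ = 1)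
    (ε : ℝ) (hε : ε = snorm (Vpperpᵀ * Vh))
    (R : Matrix (Fin N) (Fin p) ℝ)
    (hR : R = S * Vh - Vh * (Vhᵀ * S * Vh)) :
    snorm R ≤ 2 * snorm S * ε :=
  ritz_residual_bound_general N p q S Vp Vpperp Sp Sq horthV hcompleteV hSdecomp Vh Vhperp hVh
    horthVh hcompleteVh ε hε R hR
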